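/- With notation as in the projected LS step (y = ℓ − I_TI_Tᵀℓ, Ψ = I − P̂P̂ᵀ, e := ℓ̂ − ℓ = −I_T(Ψ_TᵀΨ_T)^{-1}I_TᵀΨℓ), if ℓ = Pa for a basis matrix P and ‖I_TᵀP̂‖ ≤ δ < 1, then ‖e‖ ≤ (1/(1−δ²)) · ‖(I − P̂P̂ᵀ)P‖ · ‖a‖, i.e., the recovery error is bounded by a constant times sin θ_max(P̂, P) times ‖ℓ's coefficient norm‖. -/
import Mathlib


open Matrix BigOperators MeasureTheory

/-- Spectral (operator 2-) norm of a real matrix. -/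
noncomputable def specNorm {m n : Type*} [Fintype m] [Fintype n] [DecidableEq n]
    (A : Matrix m n ℝ) : ℝ :=
  ‖LinearMap.toContinuousLinearMap (Matrix.toEuclideanLin A)‖

/-- Euclidean norm of a vector. -/
noncomputable def vecNorm {n : Type*} [Fintype n] (v : n → ℝ) : ℝ :=
  Real.sqrt (∑ i, v i ^ 2)

/-- The selection matrix I_T whose columns are the standard basis vectors indexed by T. -/
def selMat {n : ℕ} (T : Finset (Fin n)) : Matrix (Fin n) {i // i ∈ T} ℝ :=
  fun i j => if i = (j : Fin n) then 1 else 0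

open scoped Matrix.Norms.L2Operator

lemma specNorm_eq_l2 {m n : Type*} [Fintype m] [Fintype n] [DecidableEq n]
    (A : Matrix m n ℝ) : specNorm A = ‖A‖ := rfl

lemma vecNorm_eq_norm {n : Type*} [Fintype n] (v : n → ℝ) :
    vecNorm v = ‖(EuclideanSpace.equiv n ℝ).symm v‖ := by
  rw [EuclideanSpace.norm_eq, vecNorm]
  congr 1
  refine Finset.sum_congr rfl fun i _ => ?_
  rw [Real.norm_eq_abs, sq_abs]
  rfl

lemma vecNorm_mulVec_le {m n : Type*} [Fintype m] [Fintype n] [DecidableEq n]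
    (A : Matrix m n ℝ) (v : n → ℝ) : vecNorm (A *ᵥ v) ≤ ‖A‖ * vecNorm v := by
  rw [vecNorm_eq_norm, vecNorm_eq_norm]
  exact Matrix.l2_opNorm_mulVec A ((EuclideanSpace.equiv n ℝ).symm v)

lemma l2_norm_one_le (k : Type*) [Fintype k] [DecidableEq k] :
    ‖(1 : Matrix k k ℝ)‖ ≤ 1 := by
  rw [Matrix.l2_opNorm_def]
  have h1 : (Matrix.toEuclideanLin.trans LinearMap.toContinuousLinearMap)
      (1 : Matrix k k ℝ) = ContinuousLinearMap.id ℝ (EuclideanSpace ℝ k) := by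
    ext x i
    simp [Matrix.toEuclideanLin_apply]
  rw [h1]
  exact ContinuousLinearMap.norm_id_le

lemma selMat_orth {n : ℕ} (T : Finset (Fin n)) : (selMat T)ᵀ * selMat T = 1 := by
  ext j k
  simp only [Matrix.mul_apply, Matrix.transpose_apply, selMat, Matrix.one_apply]
  rw [Finset.sum_eq_single (j : Fin n)]
  · by_cases h : j = k
    · simp [h]
    · have : (j : Fin n) ≠ (k : Fin n) := fun hc => h (Subtype.ext hc)
      simp [this, h]
  · intro b _ hb; simp [hb]
  · intro h; exact absurd (Finset.mem_univ _) h

lemma selMat_norm_le {n : ℕ} (T : Finset (Fin n)) : ‖selMat T‖ ≤ 1 := by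
  have h := Matrix.l2_opNorm_conjTranspose_mul_self (selMat T)
  rw [Matrix.conjTranspose_eq_transpose_of_trivial, selMat_orth] at h
  have h1 := l2_norm_one_le {i // i ∈ T}
  have h0 : (0:ℝ) ≤ ‖selMat T‖ := norm_nonneg _
  nlinarith [h1, h.symm.le, h.le]

/-- Recovery-error bound for the projected least squares step. -/
theorem projected_LS_error_bound {n r : ℕ} (T : Finset (Fin n))
    (P Ph : Matrix (Fin n) (Fin r) ℝ) (hP : Pᵀ * P = 1) (hPh : Phᵀ * Ph = 1)
    (a : Fin r → ℝ) (ℓ : Fin n → ℝ) (hl : ℓ = P *ᵥ a)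
    (δ : ℝ) (hδ1 : δ < 1) (hden : specNorm ((selMat T)ᵀ * Ph) ≤ δ) :
    let Ψ : Matrix (Fin n) (Fin n) ℝ := 1 - Ph * Phᵀ
    let ΨT := Ψ * selMat T
    let e := -((selMat T * (ΨTᵀ * ΨT)⁻¹ * (selMat T)ᵀ * Ψ) *ᵥ ℓ)
    vecNorm e ≤ (1 / (1 - δ ^ 2)) * specNorm ((1 - Ph * Phᵀ) * P) * vecNorm a := by
  intro Ψ ΨT e
  set M : Matrix {i // i ∈ T} (Fin r) ℝ := (selMat T)ᵀ * Ph with hM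
  rw [specNorm_eq_l2] at hden
  have hδ0 : (0:ℝ) ≤ δ := le_trans (norm_nonneg _) hden
  have hδsq : δ ^ 2 < 1 := by nlinarith
  -- Ψ is symmetric and idempotent
  have hΨT : Ψᵀ = Ψ := by
    simp only [Ψ, Matrix.transpose_sub, Matrix.transpose_one, Matrix.transpose_mul,
      Matrix.transpose_transpose]
  have hΨidem : Ψ * Ψ = Ψ := by
    simp only [Ψ, Matrix.sub_mul, Matrix.mul_sub, Matrix.one_mul, Matrix.mul_one]
    rw [Matrix.mul_assoc, ← Matrix.mul_assoc Phᵀ Ph Phᵀ, hPh, Matrix.one_mul]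
    abel
  -- the Gram matrix
  set G : Matrix {i // i ∈ T} {i // i ∈ T} ℝ := ΨTᵀ * ΨT with hGdef
  have hG : G = 1 - M * Mᵀ := by
    have : G = (selMat T)ᵀ * Ψ * selMat T := by
      rw [hGdef]
      show (Ψ * selMat T)ᵀ * (Ψ * selMat T) = _
      rw [Matrix.transpose_mul, hΨT, Matrix.mul_assoc ((selMat T)ᵀ) Ψ,
        ← Matrix.mul_assoc Ψ Ψ (selMat T), hΨidem, Matrix.mul_assoc]
    rw [this]
    simp only [Ψ, Matrix.mul_sub, Matrix.sub_mul, Matrix.mul_one]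
    rw [selMat_orth, hM]
    congr 1
    rw [Matrix.transpose_mul, Matrix.transpose_transpose]
    rw [Matrix.mul_assoc, Matrix.mul_assoc, Matrix.mul_assoc]
  have hMT : ‖Mᵀ‖ = ‖M‖ := by
    rw [← Matrix.conjTranspose_eq_transpose_of_trivial]
    exact Matrix.l2_opNorm_conjTranspose M
  have hMM : ‖M * Mᵀ‖ < 1 := by
    calc ‖M * Mᵀ‖ ≤ ‖M‖ * ‖Mᵀ‖ := Matrix.l2_opNorm_mul _ _
    _ = ‖M‖ * ‖M‖ := by rw [hMT]
    _ ≤ δ * δ := by nlinarith [norm_nonneg M]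
    _ < 1 := by nlinarith
  -- invertibility of G
  have hUnit : IsUnit G := by
    rw [hG]
    exact (Units.oneSub (M * Mᵀ) hMM).isUnit
  have hGinv : G * G⁻¹ = 1 :=
    Matrix.mul_nonsing_inv _ ((Matrix.isUnit_iff_isUnit_det G).mp hUnit)
  -- bound on ‖G⁻¹‖
  have hGinvEq : G⁻¹ = 1 + M * Mᵀ * G⁻¹ := by
    have : (1 - M * Mᵀ) * G⁻¹ = 1 := by rw [← hG]; exact hGinv
    rw [Matrix.sub_mul, Matrix.one_mul, sub_eq_iff_eq_add] at this
    exact this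
  have hGinvNorm : ‖G⁻¹‖ ≤ 1 / (1 - δ ^ 2) := by
    have h1 : ‖G⁻¹‖ ≤ 1 + δ ^ 2 * ‖G⁻¹‖ := by
      calc ‖G⁻¹‖ = ‖(1 : Matrix {i // i ∈ T} {i // i ∈ T} ℝ) + M * Mᵀ * G⁻¹‖ := by
            rw [← hGinvEq]
        _ ≤ ‖(1 : Matrix {i // i ∈ T} {i // i ∈ T} ℝ)‖ + ‖M * Mᵀ * G⁻¹‖ := norm_add_le _ _
        _ ≤ 1 + ‖M * Mᵀ‖ * ‖G⁻¹‖ :=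
            add_le_add (l2_norm_one_le _) (Matrix.l2_opNorm_mul _ _)
        _ ≤ 1 + δ ^ 2 * ‖G⁻¹‖ := by
            have hMMle : ‖M * Mᵀ‖ ≤ δ ^ 2 := by
              calc ‖M * Mᵀ‖ ≤ ‖M‖ * ‖Mᵀ‖ := Matrix.l2_opNorm_mul _ _
                _ = ‖M‖ * ‖M‖ := by rw [hMT]
                _ ≤ δ ^ 2 := by nlinarith [norm_nonneg M]
            nlinarith [norm_nonneg (G⁻¹)]
    have hpos : 0 < 1 - δ ^ 2 := by linarith
    rw [le_div_iff₀ hpos]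
    nlinarith
  -- assemble
  have he : e = -(((selMat T * G⁻¹ * (selMat T)ᵀ) * (Ψ * P)) *ᵥ a) := by
    show -((selMat T * G⁻¹ * (selMat T)ᵀ * Ψ) *ᵥ ℓ) = _
    rw [hl, Matrix.mulVec_mulVec]
    congr 2
    simp only [Matrix.mul_assoc]
  have hnegnorm : vecNorm e = vecNorm (((selMat T * G⁻¹ * (selMat T)ᵀ) * (Ψ * P)) *ᵥ a) := by
    rw [he, vecNorm]
    simp only [Pi.neg_apply, neg_sq]
    rfl
  rw [hnegnorm]
  have hselT : ‖(selMat T)ᵀ‖ ≤ 1 := by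
    rw [← Matrix.conjTranspose_eq_transpose_of_trivial,
      Matrix.l2_opNorm_conjTranspose]
    exact selMat_norm_le T
  have hC : ‖selMat T * G⁻¹ * (selMat T)ᵀ‖ ≤ 1 / (1 - δ ^ 2) := by
    have h1 : ‖selMat T * G⁻¹‖ ≤ ‖G⁻¹‖ := by
      calc ‖selMat T * G⁻¹‖ ≤ ‖selMat T‖ * ‖G⁻¹‖ := Matrix.l2_opNorm_mul _ _
        _ ≤ 1 * ‖G⁻¹‖ := by
            exact mul_le_mul_of_nonneg_right (selMat_norm_le T) (norm_nonneg _)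
        _ = ‖G⁻¹‖ := one_mul _
    calc ‖selMat T * G⁻¹ * (selMat T)ᵀ‖ ≤ ‖selMat T * G⁻¹‖ * ‖(selMat T)ᵀ‖ :=
          Matrix.l2_opNorm_mul _ _
      _ ≤ ‖G⁻¹‖ * 1 := by
          exact mul_le_mul h1 hselT (norm_nonneg _) (le_trans (norm_nonneg _) h1)
      _ = ‖G⁻¹‖ := mul_one _
      _ ≤ 1 / (1 - δ ^ 2) := hGinvNorm
  calc vecNorm (((selMat T * G⁻¹ * (selMat T)ᵀ) * (Ψ * P)) *ᵥ a)
      ≤ ‖(selMat T * G⁻¹ * (selMat T)ᵀ) * (Ψ * P)‖ * vecNorm a :=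
        vecNorm_mulVec_le _ _
    _ ≤ (‖selMat T * G⁻¹ * (selMat T)ᵀ‖ * ‖Ψ * P‖) * vecNorm a := by
        have := Matrix.l2_opNorm_mul (selMat T * G⁻¹ * (selMat T)ᵀ) (Ψ * P)
        have hv : (0:ℝ) ≤ vecNorm a := Real.sqrt_nonneg _
        exact mul_le_mul_of_nonneg_right this hv
    _ ≤ (1 / (1 - δ ^ 2)) * specNorm ((1 - Ph * Phᵀ) * P) * vecNorm a := by
        have hv : (0:ℝ) ≤ vecNorm a := Real.sqrt_nonneg _
        have hΨP : ‖Ψ * P‖ = specNorm ((1 - Ph * Phᵀ) * P) := rfl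
        rw [← hΨP]
        have h0 : (0:ℝ) ≤ ‖Ψ * P‖ := norm_nonneg _
        have := mul_le_mul_of_nonneg_right
          (mul_le_mul_of_nonneg_right hC h0) hv
        linarith
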